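/- arXiv:2312.10615 — 3 statements merged into one kernel-verified Lean document; each statement's English description precedes it below -/
import Mathlib

section
/- Let K_i = C_i^T (C_i L C_i^T)^{-1} C_i for i = 1,...,n with L symmetric invertible. Define the multiplicative Vanka operator S^{(1)} = [I - prod_{i=1}^{n} (I - K_i L)] L^{-1} (product in increasing order of i) and S^{(2)} the same with the product in decreasing order of i. Then S^{(2)} = (S^{(1)})^T. -/
open Matrix

lemma conj_list_prod {N : ℕ} (L : Matrix (Fin N) (Fin N) ℝ)
    (h1 : L * L⁻¹ = 1) (h2 : L⁻¹ * L = 1) (l : List (Matrix (Fin N) (Fin N) ℝ)) :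
    (l.map fun a => L * a * L⁻¹).prod = L * l.prod * L⁻¹ := by
  induction l with
  | nil => simp [h1]
  | cons a t ih =>
      simp only [List.map_cons, List.prod_cons, ih]
      rw [show L * a * L⁻¹ * (L * t.prod * L⁻¹) = L * a * (L⁻¹ * L) * t.prod * L⁻¹ by
        noncomm_ring, h2]
      noncomm_ring

theorem stmt_7 {N n : ℕ} (m : Fin n → ℕ)
    (L : Matrix (Fin N) (Fin N) ℝ) (hL : L.IsSymm) (hLinv : IsUnit L)
    (C : ∀ i, Matrix (Fin (m i)) (Fin N) ℝ)
    (hinv : ∀ i, IsUnit (C i * L * (C i)ᵀ))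
    (K : Fin n → Matrix (Fin N) (Fin N) ℝ)
    (hK : ∀ i, K i = (C i)ᵀ * (C i * L * (C i)ᵀ)⁻¹ * C i)
    (S1 S2 : Matrix (Fin N) (Fin N) ℝ)
    (hS1 : S1 = (1 - (List.ofFn fun i => 1 - K i * L).prod) * L⁻¹)
    (hS2 : S2 = (1 - ((List.ofFn fun i => 1 - K i * L).reverse).prod) * L⁻¹) :
    S2 = S1ᵀ := by
  have hLdet : IsUnit L.det := (Matrix.isUnit_iff_isUnit_det L).mp hLinv
  have h1 : L * L⁻¹ = 1 := Matrix.mul_nonsing_inv L hLdet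
  have h2 : L⁻¹ * L = 1 := Matrix.nonsing_inv_mul L hLdet
  have hLinvSymm : (L⁻¹)ᵀ = L⁻¹ := by
    rw [Matrix.transpose_nonsing_inv, hL.eq]
  have hKsymm : ∀ i, (K i)ᵀ = K i := by
    intro i
    rw [hK i,
      show ((C i)ᵀ * (C i * L * (C i)ᵀ)⁻¹ * C i)ᵀ
          = (C i)ᵀ * ((C i * L * (C i)ᵀ)⁻¹)ᵀ * C i by
        simp [Matrix.transpose_mul, Matrix.mul_assoc],
      Matrix.transpose_nonsing_inv,
      show (C i * L * (C i)ᵀ)ᵀ = C i * L * (C i)ᵀ by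
        simp [Matrix.transpose_mul, Matrix.mul_assoc, hL.eq]]
  have hfact : ∀ i : Fin n, (1 - K i * L)ᵀ = L * (1 - K i * L) * L⁻¹ := by
    intro i
    rw [Matrix.transpose_sub, Matrix.transpose_one, Matrix.transpose_mul, hKsymm i, hL.eq]
    rw [Matrix.mul_sub, Matrix.sub_mul, Matrix.mul_one, h1]
    rw [show L * (K i * L) * L⁻¹ = L * K i * (L * L⁻¹) by noncomm_ring, h1, Matrix.mul_one]
  set l := List.ofFn fun i => 1 - K i * L with hl
  have hmem : ∀ a ∈ l.reverse, aᵀ = L * a * L⁻¹ := by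
    intro a ha
    rw [List.mem_reverse, hl, List.mem_ofFn] at ha
    obtain ⟨i, rfl⟩ := ha
    exact hfact i
  have hPT : l.prodᵀ = L * l.reverse.prod * L⁻¹ := by
    rw [Matrix.transpose_list_prod, ← List.map_reverse, List.map_congr_left hmem,
      conj_list_prod L h1 h2]
  rw [hS1, hS2, Matrix.transpose_mul, hLinvSymm, Matrix.transpose_sub,
    Matrix.transpose_one, hPT]
  rw [Matrix.mul_sub, Matrix.mul_one, Matrix.sub_mul, Matrix.one_mul,
    show L⁻¹ * (L * l.reverse.prod * L⁻¹) = (L⁻¹ * L) * (l.reverse.prod * L⁻¹) by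
      noncomm_ring, h2, Matrix.one_mul]
end

section
/- In symmetric distributive Gauss-Seidel with forward sweep operator M G~^{-1} and backward sweep operator G~^{-T} M^T, starting from x^{(0)} = 0, after n double-sweeps the iterate satisfies x^{(n)} = C b with C symmetric. -/
open Matrix

theorem stmt_11 {n : ℕ} (L M G : Matrix (Fin n) (Fin n) ℝ)
    (hL : L.IsSymm) (hLinv : IsUnit L)
    (hG : G = Matrix.of fun i j => if j ≤ i then (L * M) i j else 0)
    (hGinv : IsUnit G)
    (P : Matrix (Fin n) (Fin n) ℝ)
    (hP : P = M * G⁻¹ + Gᵀ⁻¹ * Mᵀ - Gᵀ⁻¹ * Mᵀ * L * M * G⁻¹)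
    (b : Fin n → ℝ) (x : ℕ → Fin n → ℝ) (h0 : x 0 = 0)
    (hrec : ∀ k, x (k + 1) =
      (fun y => y + (Gᵀ⁻¹ * Mᵀ).mulVec (b - L.mulVec y))
        (x k + (M * G⁻¹).mulVec (b - L.mulVec (x k))))
    (N : ℕ) :
    x N = (∑ i ∈ Finset.range N, (1 - P * L) ^ i * P).mulVec b ∧
      (∑ i ∈ Finset.range N, (1 - P * L) ^ i * P).IsSymm := by
  have hPsymm : Pᵀ = P := by
    rw [hP]
    simp only [transpose_sub, transpose_add, transpose_mul, transpose_nonsing_inv,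
      transpose_transpose, hL.eq, Matrix.mul_assoc]
    abel
  have key : ∀ k, x (k + 1) = (1 - P * L).mulVec (x k) + P.mulVec b := by
    intro k
    rw [hrec k]
    simp only [hP, Matrix.add_mul, Matrix.sub_mul, mulVec_sub, mulVec_add, sub_mulVec,
      add_mulVec, one_mulVec, mulVec_mulVec, Matrix.mul_assoc]
    abel
  have hsum : ∀ k, x k = (∑ i ∈ Finset.range k, (1 - P * L) ^ i * P).mulVec b := by
    intro k
    induction k with
    | zero => simp [h0]
    | succ k ih =>
        have hS : (1 - P * L) * (∑ i ∈ Finset.range k, (1 - P * L) ^ i * P) + P =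
            ∑ i ∈ Finset.range (k + 1), (1 - P * L) ^ i * P := by
          rw [Finset.sum_range_succ', Finset.mul_sum, pow_zero, Matrix.one_mul]
          congr 1
          exact Finset.sum_congr rfl fun i _ => by rw [← Matrix.mul_assoc, ← pow_succ']
        rw [key k, ih, mulVec_mulVec, ← add_mulVec, hS]
  have hcomm : ∀ i : ℕ, P * (1 - L * P) ^ i = (1 - P * L) ^ i * P := by
    intro i
    induction i with
    | zero => simp
    | succ i ih =>
        rw [pow_succ, ← Matrix.mul_assoc, ih, pow_succ, Matrix.mul_assoc, Matrix.mul_assoc]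
        congr 1
        rw [Matrix.mul_sub, Matrix.sub_mul, Matrix.mul_one, Matrix.one_mul,
          Matrix.mul_assoc]
  refine ⟨hsum N, ?_⟩
  unfold Matrix.IsSymm
  rw [Matrix.transpose_sum]
  apply Finset.sum_congr rfl
  intro i _
  rw [transpose_mul, transpose_pow, transpose_sub, transpose_mul, transpose_one,
    hPsymm, hL.eq, hcomm]
end

section
/- If P is symmetric and C = sum over i from 0 to m-1 of (I - P L)^i P with L symmetric, then (I - P L)^n C is symmetric for every natural number n. -/
open Matrix

lemma aux_pow_mul {N : ℕ} (L P : Matrix (Fin N) (Fin N) ℝ) (k : ℕ) :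
    (1 - P * L) ^ k * P = P * (1 - L * P) ^ k := by
  induction k with
  | zero => simp
  | succ k ih =>
      rw [pow_succ', mul_assoc, ih]
      rw [show (1 - L * P) ^ (k + 1) = (1 - L * P) * (1 - L * P) ^ k from pow_succ' _ _,
        ← mul_assoc, ← mul_assoc]
      congr 1
      noncomm_ring

lemma aux_symm {N : ℕ} (L P : Matrix (Fin N) (Fin N) ℝ)
    (hL : L.IsSymm) (hP : P.IsSymm) (k : ℕ) :
    ((1 - P * L) ^ k * P).IsSymm := by
  rw [Matrix.IsSymm, transpose_mul, transpose_pow, transpose_sub, transpose_one,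
    transpose_mul, hL, hP, aux_pow_mul]

theorem stmt_17 {N : ℕ} (L P : Matrix (Fin N) (Fin N) ℝ)
    (hL : L.IsSymm) (hP : P.IsSymm) (m n : ℕ) :
    ((1 - P * L) ^ n * ∑ i ∈ Finset.range m, (1 - P * L) ^ i * P).IsSymm := by
  rw [Finset.mul_sum]
  have h : ∀ i ∈ Finset.range m,
      ((1 - P * L) ^ n * ((1 - P * L) ^ i * P)).IsSymm := by
    intro i _
    rw [← mul_assoc, ← pow_add]
    exact aux_symm L P hL hP (n + i)
  rw [Matrix.IsSymm, transpose_sum]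
  exact Finset.sum_congr rfl fun i hi => h i hi
end
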